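/- Let d ≥ 2, n ≥ 1, 1/2 ≤ α < 1, and let C be an α-separator of G_d(n) separating the vertex set into parts A and B (every component of V∖C lies entirely in A or in B, |A|, |B| ≤ α n^d, and no edge joins A to B). Fix a coordinate direction and consider the n^{d−1} grid lines in that direction. If fewer than (1−α)n^{d−1}/d of these lines intersect C, then at least ((1−α)d − (1−α))·n^{d−1}/d of the lines consist only of vertices of A, and at least that many lines consist only of vertices of B. -/

import Mathlib

/-!
A line in direction `k` that misses `C` is a path in `G_d(n) − C`, so it lies in one component,
hence entirely in `A` or entirely in `B`. Lines are disjoint with `n` points each, so at most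
`|B|/n ≤ α n^{d-1}` of the `n^{d-1}` lines lie in `B`; together with the fewer than
`(1-α) n^{d-1}/d` lines meeting `C`, this leaves at least `(1-α) n^{d-1} - (1-α) n^{d-1}/d` lines
inside `A`, and symmetrically for `B`.
-/

/-- The grid graph on the box `∏ i, {0, …, r i − 1}`: two vertices are adjacent
iff they differ in exactly one coordinate and there by exactly 1. -/
def boxGraph {d : ℕ} (r : Fin d → ℕ) : SimpleGraph ((i : Fin d) → Fin (r i)) where
  Adj v w := ∃ k, (∀ j, j ≠ k → v j = w j) ∧
    ((v k : ℕ) + 1 = (w k : ℕ) ∨ (w k : ℕ) + 1 = (v k : ℕ))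
  symm := ⟨by
    rintro v w ⟨k, h1, h2⟩
    exact ⟨k, fun j hj => (h1 j hj).symm, h2.symm⟩⟩
  loopless := ⟨by
    rintro v ⟨k, _, h2⟩
    omega⟩

/-- The `d`-dimensional grid graph `G_d(n)` on `{0, …, n−1}^d`. -/
def gridGraph (d n : ℕ) : SimpleGraph ((_ : Fin d) → Fin n) :=
  boxGraph (fun _ => n)

/-- The graph `G` with the vertices of `C` avoided: edges of `G` with both
endpoints outside `C`. Its reachability classes on `Cᶜ` are the connected
components of `G` with `C` removed. -/
def avoidGraph {V : Type*} (G : SimpleGraph V) (C : Set V) : SimpleGraph V where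
  Adj a b := G.Adj a b ∧ a ∉ C ∧ b ∉ C
  symm := ⟨fun _ _ ⟨h, ha, hb⟩ => ⟨h.symm, hb, ha⟩⟩
  loopless := ⟨fun a ⟨h, _, _⟩ => G.ne_of_adj h rfl⟩

open Finset Function SimpleGraph

theorem SimpleGraph.Reachable.mem_of_forall_adj {V : Type*} {G : SimpleGraph V} {S : Set V}
    (hS : ∀ ⦃u v⦄, G.Adj u v → u ∈ S → v ∈ S) {u v : V} (huv : G.Reachable u v) (hu : u ∈ S) :
    v ∈ S := by
  rw [reachable_iff_reflTransGen] at huv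
  induction huv with
  | refl => exact hu
  | tail _ hadj ih => exact hS hadj ih

theorem mem_of_avoidGraph_adj {V : Type*} {G : SimpleGraph V} {A B C : Set V}
    (hcover : ∀ v, v ∈ A ∨ v ∈ B ∨ v ∈ C) (hnoedge : ∀ a ∈ A, ∀ b ∈ B, ¬ G.Adj a b)
    {u v : V} (huv : (avoidGraph G C).Adj u v) (hu : u ∈ A) : v ∈ A := by
  obtain ⟨hadj, -, hvC⟩ := huv
  rcases hcover v with hv | hv | hv
  · exact hv
  · exact absurd hadj (hnoedge u hu v hv)
  · exact absurd hv hvC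

theorem card_filter_update_mem {ι β : Type*} [DecidableEq ι] [Fintype ι] [Fintype β]
    [DecidableEq β] (k : ι) (b : β) (T : Finset (ι → β)) (hT : ∀ w ∈ T, w k = b) :
    #{v | update v k b ∈ T} = #T * Fintype.card β := by
  rw [← card_univ, ← card_product]
  refine card_nbij' (fun v => (update v k b, v k)) (fun p => update p.1 k p.2) ?_ ?_ ?_ ?_
  · intro v hv
    simpa using hv
  · rintro ⟨w, t⟩ hw
    obtain ⟨hwT, -⟩ := mem_product.1 hw
    simpa [← hT w hwT] using hwT
  · intro v _
    simp
  · rintro ⟨w, t⟩ hw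
    simp_all

theorem card_le_card_filter_add_card_filter_add_card_filter {α : Type*} [DecidableEq α]
    {s : Finset α} {p q r : α → Prop} [DecidablePred p] [DecidablePred q] [DecidablePred r]
    (h : ∀ x ∈ s, p x ∨ q x ∨ r x) : #s ≤ #(s.filter p) + #(s.filter q) + #(s.filter r) :=
  calc #s ≤ #(s.filter p ∪ s.filter q ∪ s.filter r) := card_le_card fun x hx => by
        simpa only [mem_union, mem_filter, hx, true_and, or_assoc] using h x hx
    _ ≤ _ := (card_union_le _ _).trans (Nat.add_le_add_right (card_union_le _ _) _)

variable {d n : ℕ}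

def gridLine (k : Fin d) (w : Fin d → Fin n) : Set (Fin d → Fin n) :=
  {v | ∀ j, j ≠ k → v j = w j}

theorem update_mem_gridLine (k : Fin d) (w : Fin d → Fin n) (t : Fin n) :
    update w k t ∈ gridLine k w :=
  fun _ hj => update_of_ne hj _ _

theorem update_eq_of_mem_gridLine {k : Fin d} {w v : Fin d → Fin n} (hv : v ∈ gridLine k w) :
    update w k (v k) = v :=
  update_eq_iff.2 ⟨rfl, fun j hj => (hv j hj).symm⟩

def gridLineHom (k : Fin d) (w : Fin d → Fin n) {C : Set (Fin d → Fin n)}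
    (hC : Disjoint (gridLine k w) C) : pathGraph n →g avoidGraph (gridGraph d n) C where
  toFun := update w k
  map_rel' {s t} hst :=
    ⟨⟨k, fun j hj => by simp [hj], by simpa [pathGraph_adj] using hst⟩,
      hC.notMem_of_mem_left (update_mem_gridLine k w s),
      hC.notMem_of_mem_left (update_mem_gridLine k w t)⟩

theorem reachable_of_mem_gridLine {k : Fin d} {w v : Fin d → Fin n} {C : Set (Fin d → Fin n)}
    (hC : Disjoint (gridLine k w) C) (hv : v ∈ gridLine k w) :
    (avoidGraph (gridGraph d n) C).Reachable w v := by
  have h := (pathGraph_preconnected n (w k) (v k)).map (gridLineHom k w hC)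
  change (avoidGraph _ C).Reachable (update w k (w k)) (update w k (v k)) at h
  rwa [update_eq_self, update_eq_of_mem_gridLine hv] at h

theorem gridLine_subset_of_mem {A B C : Set (Fin d → Fin n)}
    (hcover : ∀ v, v ∈ A ∨ v ∈ B ∨ v ∈ C)
    (hnoedge : ∀ a ∈ A, ∀ b ∈ B, ¬ (gridGraph d n).Adj a b)
    {k : Fin d} {w : Fin d → Fin n} (hC : Disjoint (gridLine k w) C) (hw : w ∈ A) :
    gridLine k w ⊆ A := fun _ hv =>
  (reachable_of_mem_gridLine hC hv).mem_of_forall_adj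
    (fun _ _ huv hu => mem_of_avoidGraph_adj hcover hnoedge huv hu) hw

theorem gridLine_subset_or_subset_or_meets {A B C : Set (Fin d → Fin n)}
    (hcover : ∀ v, v ∈ A ∨ v ∈ B ∨ v ∈ C)
    (hnoedge : ∀ a ∈ A, ∀ b ∈ B, ¬ (gridGraph d n).Adj a b) (k : Fin d) (w : Fin d → Fin n) :
    gridLine k w ⊆ A ∨ gridLine k w ⊆ B ∨ ∃ v ∈ C, v ∈ gridLine k w := by
  by_cases hmeets : ∃ v ∈ C, v ∈ gridLine k w
  · exact Or.inr (Or.inr hmeets)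
  have hC : Disjoint (gridLine k w) C :=
    Set.disjoint_left.2 fun v hv hvC => hmeets ⟨v, hvC, hv⟩
  rcases hcover w with hw | hw | hw
  · exact Or.inl (gridLine_subset_of_mem hcover hnoedge hC hw)
  · refine Or.inr (Or.inl (gridLine_subset_of_mem (A := B) (B := A) ?_ ?_ hC hw))
    · exact fun v => by rcases hcover v with h | h | h <;> simp [h]
    · exact fun b hb a ha hba => hnoedge a ha b hb hba.symm
  · exact absurd ⟨w, hw, fun _ _ => rfl⟩ hmeets

theorem card_filter_val_apply_eq_zero (hn : 1 ≤ n) (k : Fin d) :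
    #{w : Fin d → Fin n | (w k : ℕ) = 0} = n ^ (d - 1) := by
  simpa [Fin.ext_iff] using
    Fintype.card_filter_piFinset_const_eq_of_mem (univ : Finset (Fin n)) k (mem_univ ⟨0, hn⟩)

theorem card_le_of_forall_gridLine_subset (hn : 1 ≤ n) {k : Fin d}
    {T S : Finset (Fin d → Fin n)} {α : ℝ} (hT : T ⊆ univ.filter fun w => (w k : ℕ) = 0)
    (hTS : ∀ w ∈ T, gridLine k w ⊆ S) (hS : (#S : ℝ) ≤ α * n ^ d) :
    (#T : ℝ) ≤ α * n ^ (d - 1) := by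
  have hT0 : ∀ w ∈ T, w k = ⟨0, hn⟩ := fun w hw => Fin.ext (mem_filter.1 (hT hw)).2
  -- the points whose base point `update v k 0` lies in `T` fill exactly the lines through `T`
  have hcount : n * #T ≤ #S := calc
    n * #T = #{v | update v k ⟨0, hn⟩ ∈ T} := by
      rw [card_filter_update_mem k _ T hT0, Fintype.card_fin, mul_comm]
    _ ≤ #S := card_le_card fun v hv =>
      hTS _ (mem_filter.1 hv).2 (fun j hj => (update_of_ne hj _ _).symm)
  refine le_of_mul_le_mul_left ?_ (show (0 : ℝ) < n by exact_mod_cast hn)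
  calc (n : ℝ) * #T ≤ #S := by exact_mod_cast hcount
    _ ≤ α * n ^ d := hS
    _ = n * (α * n ^ (d - 1)) := by rw [← mul_pow_sub_one k.pos.ne' (n : ℝ)]; ring

theorem grid_lines_in_sides_general
    (d n : ℕ) (hn : 1 ≤ n)
    (α : ℝ)
    (k : Fin d)
    (A B C : Finset ((_ : Fin d) → Fin n))
    (hcover : A ∪ B ∪ C = Finset.univ)
    (hA : (A.card : ℝ) ≤ α * (n : ℝ) ^ d)
    (hB : (B.card : ℝ) ≤ α * (n : ℝ) ^ d)
    (hnoedge : ∀ a ∈ A, ∀ b ∈ B, ¬ (gridGraph d n).Adj a b)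
    (hfewlines :
      (((Finset.univ.filter (fun w : (_ : Fin d) → Fin n => (w k : ℕ) = 0)).filter
          (fun w => ∃ v ∈ C, ∀ j, j ≠ k → v j = w j)).card : ℝ)
        < (1 - α) * (n : ℝ) ^ (d - 1) / d) :
    ((1 - α) * d - (1 - α)) * (n : ℝ) ^ (d - 1) / d
        ≤ (((Finset.univ.filter (fun w : (_ : Fin d) → Fin n => (w k : ℕ) = 0)).filter
            (fun w => ∀ v : (_ : Fin d) → Fin n, (∀ j, j ≠ k → v j = w j) → v ∈ A)).card : ℝ) ∧
    ((1 - α) * d - (1 - α)) * (n : ℝ) ^ (d - 1) / d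
        ≤ (((Finset.univ.filter (fun w : (_ : Fin d) → Fin n => (w k : ℕ) = 0)).filter
            (fun w => ∀ v : (_ : Fin d) → Fin n, (∀ j, j ≠ k → v j = w j) → v ∈ B)).card : ℝ) := by
  set L : Finset (Fin d → Fin n) := {w | (w k : ℕ) = 0}
  set LA := L.filter fun w => ∀ v : Fin d → Fin n, (∀ j, j ≠ k → v j = w j) → v ∈ A
  set LB := L.filter fun w => ∀ v : Fin d → Fin n, (∀ j, j ≠ k → v j = w j) → v ∈ B
  set LC := L.filter fun w => ∃ v ∈ C, ∀ j, j ≠ k → v j = w j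
  have hcov : ∀ v, v ∈ A ∨ v ∈ B ∨ v ∈ C := fun v => by
    simpa [or_assoc] using eq_univ_iff_forall.1 hcover v
  have hsplit : #L ≤ #LA + #LB + #LC :=
    card_le_card_filter_add_card_filter_add_card_filter fun w _ =>
      gridLine_subset_or_subset_or_meets (C := (C : Set (Fin d → Fin n))) hcov hnoedge k w
  have hLA := card_le_of_forall_gridLine_subset (T := LA) hn (filter_subset _ L)
    (fun w hw => (mem_filter.1 hw).2) hA
  have hLB := card_le_of_forall_gridLine_subset (T := LB) hn (filter_subset _ L)
    (fun w hw => (mem_filter.1 hw).2) hB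
  have hd : (0 : ℝ) < d := by exact_mod_cast k.pos
  have hsplitR : (n : ℝ) ^ (d - 1) ≤ #LA + #LB + #LC := by
    exact_mod_cast card_filter_val_apply_eq_zero hn k ▸ hsplit
  have hLC := (lt_div_iff₀ hd).1 hfewlines
  constructor <;> rw [div_le_iff₀ hd] <;>
    linarith [mul_le_mul_of_nonneg_right hsplitR hd.le, mul_le_mul_of_nonneg_right hLA hd.le,
      mul_le_mul_of_nonneg_right hLB hd.le]

/-- Key step in the proof of the grid separator theorem: if `C` is an
`α`-separator of `G_d(n)` separating the rest of the vertices into sides `A` and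
`B`, and fewer than `(1−α)n^{d−1}/d` of the `n^{d−1}` grid lines in a fixed
direction `k` intersect `C`, then at least `((1−α)d − (1−α))·n^{d−1}/d` of the
lines consist only of vertices of `A`, and at least that many consist only of
vertices of `B`. (Lines are indexed by their base point with `k`-th coordinate `0`.) -/
theorem grid_lines_in_sides
    (d n : ℕ) (hd : 2 ≤ d) (hn : 1 ≤ n)
    (α : ℝ) (hα1 : 1 / 2 ≤ α) (hα2 : α < 1)
    (k : Fin d)
    (A B C : Finset ((_ : Fin d) → Fin n))
    (hAB : Disjoint A B) (hAC : Disjoint A C) (hBC : Disjoint B C)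
    (hcover : A ∪ B ∪ C = Finset.univ)
    (hA : (A.card : ℝ) ≤ α * (n : ℝ) ^ d)
    (hB : (B.card : ℝ) ≤ α * (n : ℝ) ^ d)
    (hnoedge : ∀ a ∈ A, ∀ b ∈ B, ¬ (gridGraph d n).Adj a b)
    (hfewlines :
      (((Finset.univ.filter (fun w : (_ : Fin d) → Fin n => (w k : ℕ) = 0)).filter
          (fun w => ∃ v ∈ C, ∀ j, j ≠ k → v j = w j)).card : ℝ)
        < (1 - α) * (n : ℝ) ^ (d - 1) / d) :
    ((1 - α) * d - (1 - α)) * (n : ℝ) ^ (d - 1) / d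
        ≤ (((Finset.univ.filter (fun w : (_ : Fin d) → Fin n => (w k : ℕ) = 0)).filter
            (fun w => ∀ v : (_ : Fin d) → Fin n, (∀ j, j ≠ k → v j = w j) → v ∈ A)).card : ℝ) ∧
    ((1 - α) * d - (1 - α)) * (n : ℝ) ^ (d - 1) / d
        ≤ (((Finset.univ.filter (fun w : (_ : Fin d) → Fin n => (w k : ℕ) = 0)).filter
            (fun w => ∀ v : (_ : Fin d) → Fin n, (∀ j, j ≠ k → v j = w j) → v ∈ B)).card : ℝ) :=
  grid_lines_in_sides_general d n hn α k A B C hcover hA hB hnoedge hfewlines
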